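/- There exists a constant C > 0 such that for all real numbers u, v, s: |f(u + v + s) − f(u + v) − f′(u + v) · s| ≤ C · ( (|u|^{1/3} + |v|^{1/3}) s² + |s|^{7/3} ). -/

import Mathlib

/-- The nonlinearity `f(u) = |u|^{4/3} u`. -/
noncomputable def fnl (u : ℝ) : ℝ := |u| ^ ((4 : ℝ) / 3) * u

/-- `f'(u) = (7/3) |u|^{4/3}`. -/
noncomputable def fnl' (u : ℝ) : ℝ := (7 / 3) * |u| ^ ((4 : ℝ) / 3)

lemma cbrt_subadd {x y : ℝ} (hx : 0 ≤ x) (hy : 0 ≤ y) :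
    (x + y) ^ ((1 : ℝ) / 3) ≤ x ^ ((1 : ℝ) / 3) + y ^ ((1 : ℝ) / 3) := by
  have h := NNReal.rpow_add_le_add_rpow x.toNNReal y.toNNReal
    (by norm_num : (0:ℝ) ≤ 1/3) (by norm_num : (1:ℝ)/3 ≤ 1)
  have := NNReal.coe_le_coe.2 h
  simpa [NNReal.coe_rpow, Real.coe_toNNReal x hx, Real.coe_toNNReal y hy,
    Real.toNNReal_add hx hy] using this

lemma myDerivAbsRpow (u : ℝ) :
    HasDerivAt (fun x : ℝ => |x| ^ ((4 : ℝ) / 3))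
      ((4 / 3) * Real.sign u * |u| ^ ((1 : ℝ) / 3)) u := by
  rcases lt_trichotomy u 0 with hu | hu | hu
  · have h1 : HasDerivAt (fun x : ℝ => (-x) ^ ((4 : ℝ) / 3))
        ((4 / 3) * (-u) ^ ((4 : ℝ) / 3 - 1) * (-1)) u := by
      exact (Real.hasDerivAt_rpow_const (Or.inl (by linarith))).comp u (hasDerivAt_neg u)
    have h2 : (fun x : ℝ => (-x) ^ ((4 : ℝ) / 3)) =ᶠ[nhds u]
        (fun x : ℝ => |x| ^ ((4 : ℝ) / 3)) := by
      filter_upwards [eventually_lt_nhds hu] with x hx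
      rw [abs_of_neg hx]
    have := h1.congr_of_eventuallyEq h2.symm
    refine this.congr_deriv ?_
    rw [Real.sign_of_neg hu, abs_of_neg hu]
    norm_num
  · subst hu
    rw [Real.sign_zero]
    have : HasDerivAt (fun x : ℝ => |x| ^ ((4 : ℝ) / 3)) 0 0 := by
      rw [hasDerivAt_iff_tendsto]
      have hb : ∀ x : ℝ, ‖x - 0‖⁻¹ * ‖|x| ^ ((4:ℝ)/3) - |(0:ℝ)| ^ ((4:ℝ)/3) - (x - 0) • (0:ℝ)‖
          ≤ |x| ^ ((1:ℝ)/3) := by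
        intro x
        rcases eq_or_ne x 0 with rfl | hx
        · simp
        · have hx' : (0:ℝ) < |x| := abs_pos.2 hx
          have h43 : |x| ^ ((4:ℝ)/3) = |x| ^ ((1:ℝ)/3 + 1) := by norm_num
          simp only [sub_zero, abs_zero, smul_zero, Real.norm_eq_abs]
          rw [Real.zero_rpow (by norm_num), sub_zero,
            abs_of_nonneg (Real.rpow_nonneg (abs_nonneg x) _), h43,
            Real.rpow_add hx', Real.rpow_one]
          rw [show |x|⁻¹ * (|x| ^ ((1:ℝ)/3) * |x|) = |x| ^ ((1:ℝ)/3) * (|x|⁻¹ * |x|) from by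
            ring, inv_mul_cancel₀ (ne_of_gt hx'), mul_one]
      have htend : Filter.Tendsto (fun x : ℝ => |x| ^ ((1:ℝ)/3)) (nhds 0) (nhds 0) := by
        have hc : ContinuousAt (fun x : ℝ => |x| ^ ((1:ℝ)/3)) 0 := by
          apply ContinuousAt.rpow_const continuous_abs.continuousAt
          right; norm_num
        simpa [Real.zero_rpow (by norm_num : (1:ℝ)/3 ≠ 0)] using hc.tendsto
      exact squeeze_zero_norm (fun x => by
        simpa [Real.norm_eq_abs, abs_of_nonneg
          (mul_nonneg (inv_nonneg.2 (norm_nonneg _)) (norm_nonneg _))] using hb x) htend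
    simpa using this
  · have h1 : HasDerivAt (fun x : ℝ => x ^ ((4 : ℝ) / 3))
        ((4 / 3) * u ^ ((4 : ℝ) / 3 - 1)) u :=
      Real.hasDerivAt_rpow_const (Or.inl (ne_of_gt hu))
    have h2 : (fun x : ℝ => x ^ ((4 : ℝ) / 3)) =ᶠ[nhds u]
        (fun x : ℝ => |x| ^ ((4 : ℝ) / 3)) := by
      filter_upwards [eventually_gt_nhds hu] with x hx
      rw [abs_of_pos hx]
    have := h1.congr_of_eventuallyEq h2.symm
    refine this.congr_deriv ?_
    rw [Real.sign_of_pos hu, abs_of_pos hu]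
    norm_num

lemma hasDerivAt_fnl (u : ℝ) : HasDerivAt fnl (fnl' u) u := by
  have h := (myDerivAbsRpow u).mul (hasDerivAt_id u)
  have heq : (4 / 3) * Real.sign u * |u| ^ ((1 : ℝ) / 3) * u
      + |u| ^ ((4 : ℝ) / 3) * 1 = fnl' u := by
    rcases eq_or_ne u 0 with rfl | hu
    · simp [fnl', Real.zero_rpow (by norm_num : (4:ℝ)/3 ≠ 0)]
    · have hs : Real.sign u * u = |u| := by
        rcases lt_or_gt_of_ne hu with h | h
        · rw [Real.sign_of_neg h, abs_of_neg h]; ring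
        · rw [Real.sign_of_pos h, abs_of_pos h]; ring
      have h13 : |u| ^ ((1:ℝ)/3) * |u| = |u| ^ ((4:ℝ)/3) := by
        rw [show ((4:ℝ)/3) = (1:ℝ)/3 + 1 from by norm_num,
          Real.rpow_add (abs_pos.2 hu), Real.rpow_one]
      calc (4 / 3) * Real.sign u * |u| ^ ((1 : ℝ) / 3) * u + |u| ^ ((4 : ℝ) / 3) * 1
          = (4/3) * (|u| ^ ((1:ℝ)/3) * (Real.sign u * u)) + |u| ^ ((4:ℝ)/3) := by ring
        _ = (4/3) * (|u| ^ ((1:ℝ)/3) * |u|) + |u| ^ ((4:ℝ)/3) := by rw [hs]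
        _ = fnl' u := by rw [h13]; unfold fnl'; ring
  have h2 : HasDerivAt fnl
      ((4 / 3) * Real.sign u * |u| ^ ((1 : ℝ) / 3) * u + |u| ^ ((4 : ℝ) / 3) * 1) u := by
    exact h
  rwa [heq] at h2

lemma abs_rpow_sub_le (a b : ℝ) :
    |(|a| ^ ((4:ℝ)/3) - |b| ^ ((4:ℝ)/3))| ≤
      (4 / 3) * (|b| + |a - b|) ^ ((1:ℝ)/3) * |a - b| := by
  have hconv : Convex ℝ (Set.uIcc b a) := convex_uIcc b a
  have hb : ∀ x ∈ Set.uIcc b a,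
      ‖(4 / 3) * Real.sign x * |x| ^ ((1 : ℝ) / 3)‖ ≤
        (4 / 3) * (|b| + |a - b|) ^ ((1:ℝ)/3) := by
    intro x hx
    have hxb : |x - b| ≤ |a - b| := Set.abs_sub_left_of_mem_uIcc hx
    have hxle : |x| ≤ |b| + |a - b| := by
      calc |x| = |b + (x - b)| := by ring_nf
        _ ≤ |b| + |x - b| := abs_add_le _ _
        _ ≤ |b| + |a - b| := by linarith
    have h1 : |x| ^ ((1:ℝ)/3) ≤ (|b| + |a - b|) ^ ((1:ℝ)/3) :=
      Real.rpow_le_rpow (abs_nonneg x) hxle (by norm_num)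
    have hsign : |Real.sign x| ≤ 1 := by
      rcases lt_trichotomy x 0 with h | h | h <;>
        simp [Real.sign_of_neg, Real.sign_of_pos, *]
    rw [Real.norm_eq_abs, abs_mul, abs_mul]
    have h43 : |(4:ℝ)/3| = 4/3 := by norm_num
    rw [h43, abs_of_nonneg (Real.rpow_nonneg (abs_nonneg x) _)]
    calc 4/3 * |Real.sign x| * |x| ^ ((1:ℝ)/3)
        ≤ 4/3 * 1 * ((|b| + |a - b|) ^ ((1:ℝ)/3)) := by
          apply mul_le_mul (by nlinarith) h1 (Real.rpow_nonneg (abs_nonneg x) _)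
          positivity
      _ = (4 / 3) * (|b| + |a - b|) ^ ((1:ℝ)/3) := by ring
  have := hconv.norm_image_sub_le_of_norm_hasDerivWithin_le
    (f := fun x : ℝ => |x| ^ ((4:ℝ)/3))
    (f' := fun x : ℝ => (4 / 3) * Real.sign x * |x| ^ ((1 : ℝ) / 3))
    (fun x _ => (myDerivAbsRpow x).hasDerivWithinAt)
    hb (Set.left_mem_uIcc) (Set.right_mem_uIcc)
  simpa [Real.norm_eq_abs] using this

lemma key_est (w s : ℝ) :
    |fnl (w + s) - fnl w - fnl' w * s| ≤
      (28 / 9) * ((|w| ^ ((1:ℝ)/3) + |s| ^ ((1:ℝ)/3)) * s ^ 2 + |s| ^ ((7:ℝ)/3)) := by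
  set C : ℝ := (28 / 9) * (|w| ^ ((1:ℝ)/3) + |s| ^ ((1:ℝ)/3)) * |s| with hC
  have hderiv : ∀ t : ℝ, HasDerivAt (fun t => fnl (w + t) - fnl' w * t)
      (fnl' (w + t) - fnl' w) t := by
    intro t
    have h1 : HasDerivAt (fun t : ℝ => fnl (w + t)) (fnl' (w + t)) t := by
      have := (hasDerivAt_fnl (w + t)).comp t ((hasDerivAt_id t).const_add w)
      simp only [mul_one] at this
      exact this
    have h2 : HasDerivAt (fun t : ℝ => fnl' w * t) (fnl' w) t := by
      simpa using (hasDerivAt_id t).const_mul (fnl' w)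
    exact h1.sub h2
  have hbound : ∀ t ∈ Set.uIcc (0:ℝ) s, ‖fnl' (w + t) - fnl' w‖ ≤ C := by
    intro t ht
    have hts : |t| ≤ |s| := by
      have := Set.abs_sub_left_of_mem_uIcc ht
      simpa using this
    have h1 : |fnl' (w + t) - fnl' w| =
        (7/3) * |(|w + t| ^ ((4:ℝ)/3) - |w| ^ ((4:ℝ)/3))| := by
      unfold fnl'
      rw [← mul_sub, abs_mul]
      norm_num
    have h2 := abs_rpow_sub_le (w + t) w
    have h3 : (|w| + |w + t - w|) ^ ((1:ℝ)/3) ≤ |w| ^ ((1:ℝ)/3) + |t| ^ ((1:ℝ)/3) := by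
      have := cbrt_subadd (abs_nonneg w) (abs_nonneg t)
      simpa using this
    have h4 : |t| ^ ((1:ℝ)/3) ≤ |s| ^ ((1:ℝ)/3) :=
      Real.rpow_le_rpow (abs_nonneg t) hts (by norm_num)
    rw [Real.norm_eq_abs, h1]
    have hwt : |w + t - w| = |t| := by ring_nf
    calc (7/3) * |(|w + t| ^ ((4:ℝ)/3) - |w| ^ ((4:ℝ)/3))|
        ≤ (7/3) * ((4 / 3) * (|w| + |t|) ^ ((1:ℝ)/3) * |t|) := by
          have := h2
          rw [hwt] at this
          nlinarith [abs_nonneg (|w + t| ^ ((4:ℝ)/3) - |w| ^ ((4:ℝ)/3))]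
      _ = (28/9) * ((|w| + |t|) ^ ((1:ℝ)/3) * |t|) := by ring
      _ ≤ (28/9) * ((|w| ^ ((1:ℝ)/3) + |s| ^ ((1:ℝ)/3)) * |s|) := by
          have hnn : (0:ℝ) ≤ (|w| + |t|) ^ ((1:ℝ)/3) :=
            Real.rpow_nonneg (by positivity) _
          have hle : (|w| + |t|) ^ ((1:ℝ)/3) ≤ |w| ^ ((1:ℝ)/3) + |s| ^ ((1:ℝ)/3) := by
            have := cbrt_subadd (abs_nonneg w) (abs_nonneg t)
            linarith
          have := mul_le_mul hle hts (abs_nonneg t) (by positivity)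
          linarith
      _ = C := by rw [hC]; ring
  have hmvt := (convex_uIcc (0:ℝ) s).norm_image_sub_le_of_norm_hasDerivWithin_le
    (f := fun t => fnl (w + t) - fnl' w * t)
    (f' := fun t => fnl' (w + t) - fnl' w)
    (fun t _ => (hderiv t).hasDerivWithinAt)
    hbound (Set.left_mem_uIcc) (Set.right_mem_uIcc)
  simp only [Real.norm_eq_abs, mul_zero, add_zero, sub_zero] at hmvt
  have hmvt' : |fnl (w + s) - fnl' w * s - fnl w| ≤ C * |s| := hmvt
  have hfin : C * |s| = (28 / 9) * ((|w| ^ ((1:ℝ)/3) + |s| ^ ((1:ℝ)/3)) * s ^ 2) := by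
    have hss : |s| * |s| = s ^ 2 := by rw [abs_mul_abs_self]; ring
    rw [hC, ← hss]; ring
  have habs : |fnl (w + s) - fnl w - fnl' w * s| = |fnl (w + s) - fnl' w * s - fnl w| := by
    ring_nf
  rw [habs]
  have h7 : (0:ℝ) ≤ |s| ^ ((7:ℝ)/3) := Real.rpow_nonneg (abs_nonneg s) _
  calc |fnl (w + s) - fnl' w * s - fnl w| ≤ C * |s| := hmvt'
    _ = (28 / 9) * ((|w| ^ ((1:ℝ)/3) + |s| ^ ((1:ℝ)/3)) * s ^ 2) := hfin
    _ ≤ (28 / 9) * ((|w| ^ ((1:ℝ)/3) + |s| ^ ((1:ℝ)/3)) * s ^ 2 + |s| ^ ((7:ℝ)/3)) := by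
        linarith

theorem stmt_4 :
    ∃ C > (0 : ℝ), ∀ u v s : ℝ,
      |fnl (u + v + s) - fnl (u + v) - fnl' (u + v) * s| ≤
        C * ((|u| ^ ((1 : ℝ) / 3) + |v| ^ ((1 : ℝ) / 3)) * s ^ 2 + |s| ^ ((7 : ℝ) / 3)) := by
  refine ⟨56 / 9, by norm_num, fun u v s => ?_⟩
  have h := key_est (u + v) s
  have hw : |u + v| ^ ((1:ℝ)/3) ≤ |u| ^ ((1:ℝ)/3) + |v| ^ ((1:ℝ)/3) := by
    calc |u + v| ^ ((1:ℝ)/3) ≤ (|u| + |v|) ^ ((1:ℝ)/3) :=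
          Real.rpow_le_rpow (abs_nonneg _) (abs_add_le u v) (by norm_num)
      _ ≤ |u| ^ ((1:ℝ)/3) + |v| ^ ((1:ℝ)/3) := cbrt_subadd (abs_nonneg u) (abs_nonneg v)
  have hs73 : |s| ^ ((1:ℝ)/3) * s ^ 2 ≤ |s| ^ ((7:ℝ)/3) := by
    rcases eq_or_ne s 0 with rfl | hs
    · norm_num [Real.zero_rpow]
    · have h2 : s ^ 2 = |s| ^ ((2:ℝ)) := by
        rw [← sq_abs s, ← Real.rpow_natCast |s| 2]; norm_num
      rw [h2, ← Real.rpow_add (abs_pos.2 hs)]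
      norm_num
  have hs2 : (0:ℝ) ≤ s ^ 2 := sq_nonneg s
  calc |fnl (u + v + s) - fnl (u + v) - fnl' (u + v) * s|
      ≤ (28 / 9) * ((|u + v| ^ ((1:ℝ)/3) + |s| ^ ((1:ℝ)/3)) * s ^ 2 + |s| ^ ((7:ℝ)/3)) := h
    _ ≤ (56 / 9) * ((|u| ^ ((1 : ℝ) / 3) + |v| ^ ((1 : ℝ) / 3)) * s ^ 2 + |s| ^ ((7 : ℝ) / 3)) := by
        have h1 : |u + v| ^ ((1:ℝ)/3) * s ^ 2 ≤
            (|u| ^ ((1:ℝ)/3) + |v| ^ ((1:ℝ)/3)) * s ^ 2 :=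
          mul_le_mul_of_nonneg_right hw hs2
        have h2 : (0:ℝ) ≤ |u| ^ ((1:ℝ)/3) := Real.rpow_nonneg (abs_nonneg u) _
        have h3 : (0:ℝ) ≤ |v| ^ ((1:ℝ)/3) := Real.rpow_nonneg (abs_nonneg v) _
        have h4 : (0:ℝ) ≤ |s| ^ ((7:ℝ)/3) := Real.rpow_nonneg (abs_nonneg s) _
        nlinarith [hs73]
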